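/- The Gelfand–Graev Hecke algebra H_{(n)} = e_{(n)} ℂ[G] e_{(n)} is a commutative ring. -/

import Mathlib

open Matrix MonoidAlgebra

/-- `g` is upper triangular with all diagonal entries `1` (unipotent upper triangular). -/
def IsUU {F : Type} [Field F] {n : ℕ} (g : Matrix (Fin n) (Fin n) F) : Prop :=
  (∀ i j : Fin n, j < i → g i j = 0) ∧ (∀ i : Fin n, g i i = 1)

instance {F : Type} [Field F] [DecidableEq F] {n : ℕ} (g : Matrix (Fin n) (Fin n) F) :
    Decidable (IsUU g) :=
  haveI : ∀ i : Fin n, Decidable (∀ j : Fin n, j < i → g i j = 0) := fun _ => inferInstance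
  decidable_of_iff ((∀ i j : Fin n, j < i → g i j = 0) ∧ (∀ i : Fin n, g i i = 1)) Iff.rfl

/-- The set `B_μ = {μ₁, μ₁+μ₂, …, μ₁+⋯+μ_ℓ}` of partial sums of the composition `μ`. -/
def Bset (μ : List ℕ) : Finset ℕ :=
  (Finset.range μ.length).image fun k => (μ.take (k + 1)).sum

/-- The linear character `ψ_μ` of `U`, as a function on all of `GL n F`:
`ψ_μ(u) = ψ(Σ u_{i,i+1})`, where the sum runs over the superdiagonal positions whose
(1-based) row index `i` satisfies `i ∉ B_μ`. -/
noncomputable def psiMu {F : Type} [Field F] [Fintype F] [DecidableEq F]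
    (ψ : AddChar F ℂ) (n : ℕ) (μ : List ℕ) (g : GL (Fin n) F) : ℂ :=
  ψ (∑ p : Fin n × Fin n,
      if (p.1 : ℕ) + 1 = (p.2 : ℕ) ∧ (p.1 : ℕ) + 1 ∉ Bset μ
      then (g : Matrix (Fin n) (Fin n) F) p.1 p.2 else 0)

/-- The subgroup `U` of unipotent upper triangular matrices, as a finset of `GL n F`. -/
noncomputable def Uset (F : Type) [Field F] [Fintype F] [DecidableEq F] (n : ℕ) :
    Finset (GL (Fin n) F) :=
  Finset.univ.filter fun g => IsUU (g : Matrix (Fin n) (Fin n) F)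

/-- The idempotent `e_μ = (1/|U|) Σ_{u ∈ U} ψ_μ(u⁻¹) u` of the group algebra `ℂ[GL n F]`. -/
noncomputable def eMu {F : Type} [Field F] [Fintype F] [DecidableEq F]
    (ψ : AddChar F ℂ) (n : ℕ) (μ : List ℕ) : MonoidAlgebra ℂ (GL (Fin n) F) :=
  ((Uset F n).card : ℂ)⁻¹ • ∑ u ∈ Uset F n, MonoidAlgebra.single u (psiMu ψ n μ u⁻¹)

/-- A matrix is monomial when it has exactly one nonzero entry in each row and column. -/
def IsMonomialMat {F : Type} [Field F] {n : ℕ} (g : Matrix (Fin n) (Fin n) F) : Prop :=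
  (∀ i : Fin n, ∃! j : Fin n, g i j ≠ 0) ∧ (∀ j : Fin n, ∃! i : Fin n, g i j ≠ 0)

/-- The set `N_μ` of monomial matrices `v` such that whenever `u, vuv⁻¹ ∈ U` one has
`ψ_μ(u) = ψ_μ(vuv⁻¹)`. -/
noncomputable def Nmu {F : Type} [Field F] [Fintype F] [DecidableEq F]
    (ψ : AddChar F ℂ) (n : ℕ) (μ : List ℕ) : Set (GL (Fin n) F) :=
  {v | IsMonomialMat (v : Matrix (Fin n) (Fin n) F) ∧
    ∀ u : GL (Fin n) F, IsUU (u : Matrix (Fin n) (Fin n) F) →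
      IsUU ((v * u * v⁻¹ : GL (Fin n) F) : Matrix (Fin n) (Fin n) F) →
      psiMu ψ n μ u = psiMu ψ n μ (v * u * v⁻¹)}

/-- The set `M_μ` of `ℓ×ℓ` matrices of monic polynomials with nonzero constant term whose
degree row sums and degree column sums are both equal to `μ`. -/
def Mmu (F : Type) [Field F] (μ : List ℕ) :
    Set (Matrix (Fin μ.length) (Fin μ.length) (Polynomial F)) :=
  {a | (∀ i j, (a i j).Monic ∧ Polynomial.eval 0 (a i j) ≠ 0) ∧
       (∀ i, (∑ j, (a i j).natDegree) = μ.get i) ∧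
       (∀ j, (∑ i, (a i j).natDegree) = μ.get j)}

/-- The unipotent Hecke algebra `H_μ = e_μ ℂ[G] e_μ` as a subspace of the group algebra. -/
noncomputable def Hsub {F : Type} [Field F] [Fintype F] [DecidableEq F] {n : ℕ}
    (e : MonoidAlgebra ℂ (GL (Fin n) F)) : Submodule ℂ (MonoidAlgebra ℂ (GL (Fin n) F)) :=
  LinearMap.range ((LinearMap.mulLeft ℂ e).comp (LinearMap.mulRight ℂ e))

set_option linter.unusedSectionVars false

section Prelim
variable {F : Type} [Field F] {n : ℕ}

/-- superdiagonal sum -/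
def sd (A : Matrix (Fin n) (Fin n) F) : F :=
  ∑ p : Fin n × Fin n, if (p.1 : ℕ) + 1 = (p.2 : ℕ) then A p.1 p.2 else 0

/-- anti-transpose -/
def atr (A : Matrix (Fin n) (Fin n) F) : Matrix (Fin n) (Fin n) F :=
  fun i j => A j.rev i.rev

lemma atr_atr (A : Matrix (Fin n) (Fin n) F) : atr (atr A) = A := by
  ext i j; simp [atr]

lemma atr_one : atr (1 : Matrix (Fin n) (Fin n) F) = 1 := by
  ext i j
  by_cases h : i = j
  · subst h; simp [atr]
  · rw [Matrix.one_apply_ne h]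
    have : j.rev ≠ i.rev := by
      intro hc
      apply h
      have h2 := congrArg Fin.rev hc
      simpa using h2.symm
    simp [atr, Matrix.one_apply_ne this]

lemma atr_mul (A B : Matrix (Fin n) (Fin n) F) : atr (A * B) = atr B * atr A := by
  ext i j
  show (A * B) j.rev i.rev = ∑ k, atr B i k * atr A k j
  rw [Matrix.mul_apply]
  refine Fintype.sum_equiv Fin.revPerm _ _ fun k => ?_
  simp [atr, mul_comm]

lemma IsUU.atr {A : Matrix (Fin n) (Fin n) F} (h : IsUU A) : IsUU (atr A) := by
  refine ⟨fun i j hji => h.1 j.rev i.rev (Fin.rev_lt_rev.mpr hji), fun i => h.2 i.rev⟩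

/-- the swap-reverse equiv on pairs -/
def sre : (Fin n × Fin n) ≃ (Fin n × Fin n) where
  toFun p := (p.2.rev, p.1.rev)
  invFun p := (p.2.rev, p.1.rev)
  left_inv p := by simp
  right_inv p := by simp

lemma sd_atr (A : Matrix (Fin n) (Fin n) F) : sd (atr A) = sd A := by
  unfold sd
  refine Fintype.sum_equiv sre _ _ fun p => ?_
  have hiff : ((p.1 : ℕ) + 1 = (p.2 : ℕ)) ↔ ((sre p).1 : ℕ) + 1 = ((sre p).2 : ℕ) := by
    rcases p with ⟨a, b⟩
    simp only [sre, Equiv.coe_fn_mk, Fin.val_rev]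
    omega
  by_cases h : (p.1 : ℕ) + 1 = (p.2 : ℕ)
  · rw [if_pos h, if_pos (hiff.mp h)]; rfl
  · rw [if_neg h, if_neg (fun hc => h (hiff.mpr hc))]

lemma IsUU.one : IsUU (1 : Matrix (Fin n) (Fin n) F) :=
  ⟨fun _ _ hji => Matrix.one_apply_ne hji.ne', fun i => Matrix.one_apply_eq i⟩

lemma IsUU.mul {A B : Matrix (Fin n) (Fin n) F} (hA : IsUU A) (hB : IsUU B) : IsUU (A * B) := by
  constructor
  · intro i j hji
    rw [Matrix.mul_apply]
    apply Finset.sum_eq_zero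
    intro k _
    rcases lt_or_ge k i with hk | hk
    · rw [hA.1 i k hk, zero_mul]
    · rw [hB.1 k j (lt_of_lt_of_le hji hk), mul_zero]
  · intro i
    rw [Matrix.mul_apply, Finset.sum_eq_single i]
    · rw [hA.2, hB.2, one_mul]
    · intro k _ hk
      rcases lt_or_gt_of_ne hk with h | h
      · rw [hA.1 i k h, zero_mul]
      · rw [hB.1 k i h, mul_zero]
    · intro h; exact absurd (Finset.mem_univ i) h

lemma sd_mul {A B : Matrix (Fin n) (Fin n) F} (hA : IsUU A) (hB : IsUU B) :
    sd (A * B) = sd A + sd B := by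
  unfold sd
  rw [← Finset.sum_add_distrib]
  apply Finset.sum_congr rfl
  intro p _
  by_cases h : (p.1 : ℕ) + 1 = (p.2 : ℕ)
  · rw [if_pos h, if_pos h, if_pos h, Matrix.mul_apply]
    have hne : p.1 ≠ p.2 := fun hc => by rw [hc] at h; omega
    rw [← Finset.sum_subset (Finset.subset_univ {p.1, p.2})]
    · rw [Finset.sum_pair hne, hA.2, hB.2, one_mul, mul_one, add_comm]
    · intro k _ hk
      simp only [Finset.mem_insert, Finset.mem_singleton, not_or] at hk
      rcases lt_or_gt_of_ne hk.1 with h1 | h1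
      · rw [hA.1 p.1 k h1, zero_mul]
      · have h2 : p.2 < k := by
          have h3 := Fin.lt_def.mp h1
          have h4 : (k : ℕ) ≠ (p.2 : ℕ) := fun hc => hk.2 (Fin.ext hc)
          exact Fin.lt_def.mpr (by omega)
        rw [hB.1 k p.2 h2, mul_zero]
  · rw [if_neg h, if_neg h, if_neg h, add_zero]

end Prelim
section Part2
variable {F : Type} [Field F] [Fintype F] [DecidableEq F] {n : ℕ}

lemma IsUU.glInv {g : GL (Fin n) F} (h : IsUU (g : Matrix (Fin n) (Fin n) F)) :
    IsUU ((↑(g⁻¹) : Matrix (Fin n) (Fin n) F)) := by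
  set A := (↑g : Matrix (Fin n) (Fin n) F) with hA
  set B := (↑(g⁻¹) : Matrix (Fin n) (Fin n) F) with hB
  have hmul : A * B = 1 := g.mul_inv
  have key : ∀ m : ℕ, ∀ i j : Fin n, n - (i : ℕ) ≤ m → j < i → B i j = 0 := by
    intro m
    induction m with
    | zero => intro i j hm _; exact absurd hm (by have := i.isLt; omega)
    | succ m ih =>
      intro i j hm hji
      have h1 : (A * B) i j = 0 := by rw [hmul]; exact Matrix.one_apply_ne hji.ne'
      rw [Matrix.mul_apply, Finset.sum_eq_single i] at h1
      · rwa [h.2, one_mul] at h1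
      · intro k _ hk
        rcases lt_or_gt_of_ne hk with hlt | hgt
        · rw [h.1 i k hlt, zero_mul]
        · rw [ih k j (by have := Fin.lt_def.mp hgt; omega) (hji.trans hgt), mul_zero]
      · intro hc; exact absurd (Finset.mem_univ i) hc
  constructor
  · intro i j hji; exact key n i j (by omega) hji
  · intro i
    have h1 : (A * B) i i = 1 := by rw [hmul]; exact Matrix.one_apply_eq i
    rw [Matrix.mul_apply, Finset.sum_eq_single i] at h1
    · rwa [h.2, one_mul] at h1
    · intro k _ hk
      rcases lt_or_gt_of_ne hk with hlt | hgt
      · rw [h.1 i k hlt, zero_mul]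
      · rw [key n k i (by have := i.isLt; omega) hgt, mul_zero]
    · intro hc; exact absurd (Finset.mem_univ i) hc

/-- the anti-automorphism `g ↦ w₀ gᵀ w₀` of `GL n F` -/
def tauGL (g : GL (Fin n) F) : GL (Fin n) F :=
  ⟨atr g.val, atr g.inv,
   by rw [← atr_mul, g.inv_val, atr_one],
   by rw [← atr_mul, g.val_inv, atr_one]⟩

@[simp] lemma tauGL_val (g : GL (Fin n) F) :
    ((tauGL g : GL (Fin n) F) : Matrix (Fin n) (Fin n) F) = atr (↑g) := rfl

lemma tauGL_mul (g h : GL (Fin n) F) : tauGL (g * h) = tauGL h * tauGL g := by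
  apply Units.ext
  show atr ((g * h : GL (Fin n) F) : Matrix (Fin n) (Fin n) F) = _
  rw [Units.val_mul, atr_mul]; rfl

lemma tauGL_tauGL (g : GL (Fin n) F) : tauGL (tauGL g) = g :=
  Units.ext (atr_atr _)

lemma tauGL_one : tauGL (1 : GL (Fin n) F) = 1 :=
  Units.ext atr_one

lemma tauGL_inv (g : GL (Fin n) F) : (tauGL g)⁻¹ = tauGL g⁻¹ := by
  apply inv_eq_of_mul_eq_one_left
  rw [← tauGL_mul, mul_inv_cancel, tauGL_one]

lemma sd_one : sd (1 : Matrix (Fin n) (Fin n) F) = 0 := by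
  apply Finset.sum_eq_zero
  intro p _
  by_cases h : (p.1 : ℕ) + 1 = (p.2 : ℕ)
  · rw [if_pos h, Matrix.one_apply_ne (fun hc => by rw [hc] at h; omega)]
  · rw [if_neg h]

lemma psiMu_n (ψ : AddChar F ℂ) (g : GL (Fin n) F) :
    psiMu ψ n [n] g = ψ (sd (↑g : Matrix (Fin n) (Fin n) F)) := by
  unfold psiMu sd
  congr 1
  apply Finset.sum_congr rfl
  intro p _
  by_cases h : (p.1 : ℕ) + 1 = (p.2 : ℕ)
  · rw [if_pos h, if_pos]
    refine ⟨h, ?_⟩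
    rw [show Bset [n] = {n} from by simp [Bset]]
    have := p.2.isLt
    simp only [Finset.mem_singleton]
    omega
  · rw [if_neg h, if_neg (fun hc => h hc.1)]

lemma psiMu_mul {u v : GL (Fin n) F} (ψ : AddChar F ℂ)
    (hu : IsUU (↑u : Matrix (Fin n) (Fin n) F)) (hv : IsUU (↑v : Matrix (Fin n) (Fin n) F)) :
    psiMu ψ n [n] (u * v) = psiMu ψ n [n] u * psiMu ψ n [n] v := by
  rw [psiMu_n, psiMu_n, psiMu_n, Units.val_mul, sd_mul hu hv, ψ.map_add_eq_mul]

lemma psiMu_tau (ψ : AddChar F ℂ) (u : GL (Fin n) F) :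
    psiMu ψ n [n] (tauGL u) = psiMu ψ n [n] u := by
  rw [psiMu_n, psiMu_n, tauGL_val, sd_atr]

lemma psiMu_one (ψ : AddChar F ℂ) : psiMu ψ n [n] (1 : GL (Fin n) F) = 1 := by
  rw [psiMu_n, Units.val_one, sd_one, ψ.map_zero_eq_one]

lemma addChar_ne_zero (ψ : AddChar F ℂ) (y : F) : ψ y ≠ 0 := by
  intro h
  have h2 := ψ.map_add_eq_mul y (-y)
  rw [add_neg_cancel, ψ.map_zero_eq_one, h, zero_mul] at h2
  exact one_ne_zero h2

lemma psiMu_ne_zero (ψ : AddChar F ℂ) (g : GL (Fin n) F) : psiMu ψ n [n] g ≠ 0 := by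
  rw [psiMu_n]
  intro h
  have h2 := ψ.map_add_eq_mul (sd (↑g : Matrix (Fin n) (Fin n) F)) (-(sd (↑g : Matrix (Fin n) (Fin n) F)))
  rw [add_neg_cancel, ψ.map_zero_eq_one, h, zero_mul] at h2
  exact one_ne_zero h2

lemma Uset_mem {g : GL (Fin n) F} : g ∈ Uset F n ↔ IsUU (↑g : Matrix (Fin n) (Fin n) F) := by
  simp [Uset]

lemma IsUU.glMul {u v : GL (Fin n) F} (hu : IsUU (↑u : Matrix (Fin n) (Fin n) F))
    (hv : IsUU (↑v : Matrix (Fin n) (Fin n) F)) :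
    IsUU (↑(u * v) : Matrix (Fin n) (Fin n) F) := by
  rw [Units.val_mul]; exact hu.mul hv

lemma IsUU.glTau {u : GL (Fin n) F} (hu : IsUU (↑u : Matrix (Fin n) (Fin n) F)) :
    IsUU (↑(tauGL u) : Matrix (Fin n) (Fin n) F) := by
  rw [tauGL_val]; exact hu.atr

end Part2
section Part3
variable {F : Type} [Field F] [Fintype F] [DecidableEq F] {n : ℕ}

lemma e_mul_single (ψ : AddChar F ℂ) {u : GL (Fin n) F}
    (hu : IsUU (↑u : Matrix (Fin n) (Fin n) F)) :
    eMu ψ n [n] * MonoidAlgebra.single u 1 = psiMu ψ n [n] u • eMu ψ n [n] := by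
  unfold eMu
  rw [smul_mul_assoc, smul_comm]
  congr 1
  rw [Finset.sum_mul, Finset.smul_sum]
  refine Finset.sum_nbij' (fun w => w * u) (fun w => w * u⁻¹) ?_ ?_ ?_ ?_ ?_
  · intro a ha; exact Uset_mem.mpr ((Uset_mem.mp ha).glMul hu)
  · intro a ha; exact Uset_mem.mpr ((Uset_mem.mp ha).glMul hu.glInv)
  · intro a _; show a * u * u⁻¹ = a; rw [mul_assoc, mul_inv_cancel, mul_one]
  · intro a _; show a * u⁻¹ * u = a; rw [mul_assoc, inv_mul_cancel, mul_one]
  · intro w hw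
    show MonoidAlgebra.single w (psiMu ψ n [n] w⁻¹) * MonoidAlgebra.single u 1
      = psiMu ψ n [n] u • MonoidAlgebra.single (w * u) (psiMu ψ n [n] (w * u)⁻¹)
    rw [MonoidAlgebra.single_mul_single, mul_one, MonoidAlgebra.smul_single']
    congr 1
    have h2 : IsUU (↑((u⁻¹ * w⁻¹) : GL (Fin n) F) : Matrix (Fin n) (Fin n) F) := by
      have := ((Uset_mem.mp hw).glMul hu).glInv
      rwa [_root_.mul_inv_rev] at this
    rw [_root_.mul_inv_rev, ← psiMu_mul ψ hu h2, mul_inv_cancel_left]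

lemma single_mul_e (ψ : AddChar F ℂ) {u : GL (Fin n) F}
    (hu : IsUU (↑u : Matrix (Fin n) (Fin n) F)) :
    MonoidAlgebra.single u 1 * eMu ψ n [n] = psiMu ψ n [n] u • eMu ψ n [n] := by
  unfold eMu
  rw [mul_smul_comm, smul_comm]
  congr 1
  rw [Finset.mul_sum, Finset.smul_sum]
  refine Finset.sum_nbij' (fun w => u * w) (fun w => u⁻¹ * w) ?_ ?_ ?_ ?_ ?_
  · intro a ha; exact Uset_mem.mpr (hu.glMul (Uset_mem.mp ha))
  · intro a ha; exact Uset_mem.mpr (hu.glInv.glMul (Uset_mem.mp ha))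
  · intro a _; show u⁻¹ * (u * a) = a; rw [← mul_assoc, inv_mul_cancel, one_mul]
  · intro a _; show u * (u⁻¹ * a) = a; rw [← mul_assoc, mul_inv_cancel, one_mul]
  · intro w hw
    show MonoidAlgebra.single u 1 * MonoidAlgebra.single w (psiMu ψ n [n] w⁻¹)
      = psiMu ψ n [n] u • MonoidAlgebra.single (u * w) (psiMu ψ n [n] (u * w)⁻¹)
    rw [MonoidAlgebra.single_mul_single, one_mul, MonoidAlgebra.smul_single']
    congr 1
    have h2 : IsUU (↑((w⁻¹ * u⁻¹) : GL (Fin n) F) : Matrix (Fin n) (Fin n) F) := by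
      have := (hu.glMul (Uset_mem.mp hw)).glInv
      rwa [_root_.mul_inv_rev] at this
    rw [_root_.mul_inv_rev, mul_comm, ← psiMu_mul ψ h2 hu, inv_mul_cancel_right]

/-- the anti-automorphism of the group algebra induced by `tauGL` -/
noncomputable def sigmaMA : MonoidAlgebra ℂ (GL (Fin n) F) → MonoidAlgebra ℂ (GL (Fin n) F) :=
  MonoidAlgebra.mapDomain tauGL

lemma sigmaMA_single (g : GL (Fin n) F) (c : ℂ) :
    sigmaMA (MonoidAlgebra.single g c) = MonoidAlgebra.single (tauGL g) c :=
  MonoidAlgebra.mapDomain_single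

lemma sigmaMA_zero : sigmaMA (0 : MonoidAlgebra ℂ (GL (Fin n) F)) = 0 :=
  MonoidAlgebra.mapDomain_zero _

lemma sigmaMA_add (x y : MonoidAlgebra ℂ (GL (Fin n) F)) :
    sigmaMA (x + y) = sigmaMA x + sigmaMA y :=
  MonoidAlgebra.mapDomain_add _ x y

lemma sigmaMA_smul (c : ℂ) (x : MonoidAlgebra ℂ (GL (Fin n) F)) :
    sigmaMA (c • x) = c • sigmaMA x :=
  MonoidAlgebra.mapDomain_smul _ c x

lemma sigmaMA_mul (x y : MonoidAlgebra ℂ (GL (Fin n) F)) :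
    sigmaMA (x * y) = sigmaMA y * sigmaMA x := by
  induction x using MonoidAlgebra.induction_linear with
  | zero => rw [zero_mul, sigmaMA_zero, mul_zero]
  | add f g hf hg => rw [add_mul, sigmaMA_add, sigmaMA_add, hf, hg, mul_add]
  | single a b =>
    induction y using MonoidAlgebra.induction_linear with
    | zero => rw [mul_zero, sigmaMA_zero, zero_mul]
    | add f g hf hg => rw [mul_add, sigmaMA_add, sigmaMA_add, hf, hg, add_mul]
    | single c d =>
      show sigmaMA (MonoidAlgebra.single a b * MonoidAlgebra.single c d)
        = sigmaMA (MonoidAlgebra.single c d) * sigmaMA (MonoidAlgebra.single a b)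
      rw [MonoidAlgebra.single_mul_single, sigmaMA_single, sigmaMA_single, sigmaMA_single,
        MonoidAlgebra.single_mul_single, tauGL_mul, mul_comm b d]

lemma sigmaMA_eMu (ψ : AddChar F ℂ) : sigmaMA (eMu ψ n [n]) = eMu ψ n [n] := by
  unfold eMu sigmaMA
  rw [MonoidAlgebra.mapDomain_smul]
  congr 1
  show (MonoidAlgebra.mapDomainLinearMap ℂ ℂ tauGL) (∑ u ∈ Uset F n, MonoidAlgebra.single u (psiMu ψ n [n] u⁻¹)) = _
  rw [map_sum]
  show ∑ w ∈ Uset F n, (MonoidAlgebra.mapDomainLinearMap ℂ ℂ tauGL) (MonoidAlgebra.single w (psiMu ψ n [n] w⁻¹)) = _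
  refine Finset.sum_nbij' (fun w => tauGL w) (fun w => tauGL w) ?_ ?_ ?_ ?_ ?_
  · intro a ha; exact Uset_mem.mpr (Uset_mem.mp ha).glTau
  · intro a ha; exact Uset_mem.mpr (Uset_mem.mp ha).glTau
  · intro a _; exact tauGL_tauGL a
  · intro a _; exact tauGL_tauGL a
  · intro w _
    show MonoidAlgebra.mapDomain tauGL (MonoidAlgebra.single w (psiMu ψ n [n] w⁻¹)) = _
    rw [MonoidAlgebra.mapDomain_single]
    show MonoidAlgebra.single (tauGL w) (psiMu ψ n [n] w⁻¹)
      = MonoidAlgebra.single (tauGL w) (psiMu ψ n [n] (tauGL w)⁻¹)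
    rw [tauGL_inv, psiMu_tau]

lemma sigmaMA_exe (ψ : AddChar F ℂ) (x : MonoidAlgebra ℂ (GL (Fin n) F)) :
    sigmaMA (eMu ψ n [n] * x * eMu ψ n [n]) = eMu ψ n [n] * sigmaMA x * eMu ψ n [n] := by
  rw [sigmaMA_mul, sigmaMA_mul, sigmaMA_eMu, mul_assoc]

end Part3
section Part4
variable {F : Type} [Field F] {n : ℕ}

/-- monomial matrix attached to a permutation and scalars -/
def Mmat (σ : Equiv.Perm (Fin n)) (a : Fin n → F) : Matrix (Fin n) (Fin n) F :=
  fun i j => if i = σ j then a j else 0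

/-- the relevance condition on a monomial matrix -/
def RelMono (σ : Equiv.Perm (Fin n)) (a : Fin n → F) : Prop :=
  ∀ i i' : Fin n, (i' : ℕ) = (i : ℕ) + 1 →
    ((σ i' : ℕ) < (σ i : ℕ) ∨ (((σ i' : ℕ) = (σ i : ℕ) + 1) ∧ a i' = a i))

lemma perm_inj_nat (σ : Equiv.Perm (Fin n)) {x y : Fin n}
    (h : (σ x : ℕ) = (σ y : ℕ)) : (x : ℕ) = (y : ℕ) := by
  have := σ.injective (Fin.ext h)
  exact congrArg Fin.val this

lemma chain_lemma {σ : Equiv.Perm (Fin n)} {a : Fin n → F} (hrel : RelMono σ a) :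
    ∀ (d : ℕ) (x y : Fin n), (y : ℕ) = (x : ℕ) + d →
      ((σ y : ℕ) < (σ x : ℕ)) ∨
      (((σ y : ℕ) = (σ x : ℕ) + d) ∧
        ∀ z : Fin n, (x : ℕ) ≤ (z : ℕ) → (z : ℕ) ≤ (y : ℕ) →
          ((σ z : ℕ) = (σ x : ℕ) + ((z : ℕ) - (x : ℕ)) ∧ a z = a x)) := by
  intro d
  induction d with
  | zero =>
    intro x y hxy
    right
    have hxy' : y = x := Fin.ext (by omega)
    subst hxy'
    refine ⟨by omega, fun z hz1 hz2 => ?_⟩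
    have hz : z = y := Fin.ext (by omega)
    subst hz
    exact ⟨by omega, rfl⟩
  | succ d ih =>
    intro x y hxy
    have hyn : (y : ℕ) < n := y.isLt
    have hy'n : (x : ℕ) + d < n := by omega
    set y' : Fin n := ⟨(x : ℕ) + d, hy'n⟩ with hy'
    have hy'v : (y' : ℕ) = (x : ℕ) + d := rfl
    have hstep := hrel y' y (by omega)
    rcases ih x y' rfl with hlt | ⟨heq, hchain⟩
    · left
      rcases hstep with h1 | ⟨h1, _⟩
      · omega
      · have hne : (σ y : ℕ) ≠ (σ x : ℕ) := by
          intro hc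
          have := perm_inj_nat σ hc
          omega
        omega
    · rcases hstep with h1 | ⟨h1, h2⟩
      · left
        by_contra hge
        push_neg at hge
        set t := (σ y : ℕ) - (σ x : ℕ) with ht
        have htd : t < d := by omega
        have hzn : (x : ℕ) + t < n := by omega
        set z : Fin n := ⟨(x : ℕ) + t, hzn⟩ with hz
        have hzv : (z : ℕ) = (x : ℕ) + t := rfl
        have hchz := hchain z (by omega) (by omega)
        have hzy : (σ z : ℕ) = (σ y : ℕ) := by omega
        have := perm_inj_nat σ hzy
        omega
      · right
        have hay' := hchain y' (by omega) (by omega)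
        refine ⟨by omega, fun z hz1 hz2 => ?_⟩
        by_cases hzc : (z : ℕ) ≤ (y' : ℕ)
        · exact hchain z hz1 hzc
        · have hzy : z = y := Fin.ext (by omega)
          subst hzy
          exact ⟨by omega, by rw [h2, hay'.2]⟩

/-- main combinatorial lemma: a relevant monomial matrix is fixed by the anti-transpose -/
lemma RelMono.key {σ : Equiv.Perm (Fin n)} {a : Fin n → F} (hrel : RelMono σ a) (q : Fin n) :
    ((σ ((σ q).rev) : ℕ) = ((q.rev : Fin n) : ℕ)) ∧ a ((σ q).rev) = a q := by
  classical
  -- define run start s and run end e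
  have hqmemS : q ∈ Finset.univ.filter
      (fun x : Fin n => (x : ℕ) ≤ (q : ℕ) ∧ (σ q : ℕ) = (σ x : ℕ) + ((q : ℕ) - (x : ℕ))) := by
    simp
  have hqmemE : q ∈ Finset.univ.filter
      (fun y : Fin n => (q : ℕ) ≤ (y : ℕ) ∧ (σ y : ℕ) = (σ q : ℕ) + ((y : ℕ) - (q : ℕ))) := by
    simp
  set Sset := Finset.univ.filter
      (fun x : Fin n => (x : ℕ) ≤ (q : ℕ) ∧ (σ q : ℕ) = (σ x : ℕ) + ((q : ℕ) - (x : ℕ))) with hSset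
  set Eset := Finset.univ.filter
      (fun y : Fin n => (q : ℕ) ≤ (y : ℕ) ∧ (σ y : ℕ) = (σ q : ℕ) + ((y : ℕ) - (q : ℕ))) with hEset
  have hSne : Sset.Nonempty := ⟨q, hqmemS⟩
  have hEne : Eset.Nonempty := ⟨q, hqmemE⟩
  set s := Sset.min' hSne with hs
  set e := Eset.max' hEne with he
  have hsmem := Sset.min'_mem hSne
  have hemem := Eset.max'_mem hEne
  rw [← hs] at hsmem
  rw [← he] at hemem
  rw [Finset.mem_filter] at hsmem hemem
  have hsq : (s : ℕ) ≤ (q : ℕ) := hsmem.2.1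
  have hqe : (q : ℕ) ≤ (e : ℕ) := hemem.2.1
  have hsqv : (σ q : ℕ) = (σ s : ℕ) + ((q : ℕ) - (s : ℕ)) := hsmem.2.2
  have hqev : (σ e : ℕ) = (σ q : ℕ) + ((e : ℕ) - (q : ℕ)) := hemem.2.2
  -- chain from s to e
  have hse := chain_lemma hrel ((e : ℕ) - (s : ℕ)) s e (by omega)
  have hchain : ∀ z : Fin n, (s : ℕ) ≤ (z : ℕ) → (z : ℕ) ≤ (e : ℕ) →
      ((σ z : ℕ) = (σ s : ℕ) + ((z : ℕ) - (s : ℕ)) ∧ a z = a s) := by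
    rcases hse with h | h
    · exfalso; omega
    · exact h.2
  -- the counting claim : σ x > σ e ↔ x < s
  have hcount : ∀ x : Fin n, (σ e : ℕ) < (σ x : ℕ) ↔ (x : ℕ) < (s : ℕ) := by
    intro x
    constructor
    · intro hx
      by_contra hge
      push_neg at hge
      rcases Nat.lt_or_ge (e : ℕ) (x : ℕ) with hgt | hle
      · -- x > e : chain from e to x would put x in Eset, contradicting maximality
        rcases chain_lemma hrel ((x : ℕ) - (e : ℕ)) e x (by omega) with h | ⟨h, hch⟩
        · omega
        · have hmem : x ∈ Eset := by
            rw [Finset.mem_filter]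
            exact ⟨Finset.mem_univ _, by omega, by omega⟩
          have hle2 := Finset.le_max' Eset x hmem
          rw [← he, Fin.le_def] at hle2
          omega
      · -- s ≤ x ≤ e : x in the run, σ x ≤ σ e
        have := hchain x (by omega) (by omega)
        omega
    · intro hx
      rcases chain_lemma hrel ((e : ℕ) - (x : ℕ)) x e (by omega) with h | ⟨h, hch⟩
      · exact h
      · exfalso
        have hq := hch q (by omega) (by omega)
        have hmem : x ∈ Sset := by
          rw [Finset.mem_filter]
          exact ⟨Finset.mem_univ _, by omega, by omega⟩
        have hle2 := Finset.min'_le Sset x hmem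
        rw [← hs, Fin.le_def] at hle2
        omega
  -- cardinality computation gives σ e = n - 1 - s
  have hcard1 : (Finset.univ.filter (fun x : Fin n => (σ e : ℕ) < (σ x : ℕ))).card
      = (Finset.Ioi (σ e)).card := by
    apply Finset.card_bij (fun x _ => σ x)
    · intro x hx
      rw [Finset.mem_filter] at hx
      rw [Finset.mem_Ioi]
      exact Fin.lt_def.mpr hx.2
    · intro x1 h1 x2 h2 hx
      exact σ.injective hx
    · intro b hb
      refine ⟨σ.symm b, ?_, by simp⟩
      rw [Finset.mem_filter]
      refine ⟨Finset.mem_univ _, ?_⟩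
      rw [Finset.mem_Ioi, Fin.lt_def] at hb
      simp
      omega
  have hcard2 : (Finset.univ.filter (fun x : Fin n => (σ e : ℕ) < (σ x : ℕ)))
      = Finset.Iio s := by
    ext x
    rw [Finset.mem_filter, Finset.mem_Iio]
    constructor
    · intro hx; exact Fin.lt_def.mpr ((hcount x).mp hx.2)
    · intro hx; exact ⟨Finset.mem_univ _, (hcount x).mpr (Fin.lt_def.mp hx)⟩
  have hIoi := Fin.card_Ioi (σ e)
  have hIio := Fin.card_Iio s
  have hkey : (σ e : ℕ) = n - 1 - (s : ℕ) := by
    rw [hcard2, hIio] at hcard1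
    have := (σ e).isLt
    have := s.isLt
    omega
  -- now conclude
  have hqn := q.isLt
  have hsn := s.isLt
  have hen := e.isLt
  have hrv : ((σ q).rev : ℕ) = n - 1 - (σ q : ℕ) := by
    rw [Fin.val_rev]
    have := (σ q).isLt
    omega
  have hrin : (s : ℕ) ≤ ((σ q).rev : ℕ) ∧ ((σ q).rev : ℕ) ≤ (e : ℕ) := by
    constructor <;> omega
  have hfin := hchain ((σ q).rev) hrin.1 hrin.2
  have haq := hchain q (by omega) (by omega)
  constructor
  · rw [Fin.val_rev]
    omega
  · rw [hfin.2, haq.2]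

end Part4
section Part5
variable {F : Type} [Field F] {n : ℕ}

lemma stdB_apply (i j p q : Fin n) (t : F) :
    Matrix.single i j t p q = if i = p ∧ j = q then t else 0 := by
  simp [Matrix.single]

lemma RelMono.atr_fixed {σ : Equiv.Perm (Fin n)} {a : Fin n → F} (hrel : RelMono σ a) :
    atr (Mmat σ a) = Mmat σ a := by
  have K : ∀ x : Fin n, σ ((σ x).rev) = x.rev := fun x => Fin.ext (hrel.key x).1
  ext p q
  show Mmat σ a q.rev p.rev = Mmat σ a p q
  unfold Mmat
  by_cases h : p = σ q
  · have h1 : q.rev = σ (p.rev) := by rw [h]; exact (K q).symm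
    rw [if_pos h1, if_pos h, h]
    exact (hrel.key q).2
  · have h2 : q.rev ≠ σ (p.rev) := by
      intro hc
      apply h
      have h3 : (σ (p.rev)).rev = q := by rw [← hc, Fin.rev_rev]
      have h4 := K p.rev
      rw [h3] at h4
      rw [Fin.rev_rev] at h4
      exact h4.symm
    rw [if_neg h2, if_neg h]

/-- inverse of a monomial matrix -/
def Wmat (σ : Equiv.Perm (Fin n)) (a : Fin n → F) : Matrix (Fin n) (Fin n) F :=
  fun i j => if j = σ i then (a i)⁻¹ else 0

lemma Mmat_mul_Wmat {σ : Equiv.Perm (Fin n)} {a : Fin n → F} (ha : ∀ j, a j ≠ 0) :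
    Mmat σ a * Wmat σ a = 1 := by
  ext p q
  rw [Matrix.mul_apply, Finset.sum_eq_single (σ.symm p)]
  · unfold Mmat Wmat
    rw [if_pos (by simp), Equiv.apply_symm_apply]
    by_cases hpq : q = p
    · rw [if_pos hpq, hpq, Matrix.one_apply_eq, mul_inv_cancel₀ (ha _)]
    · rw [if_neg hpq, Matrix.one_apply_ne (fun hc => hpq hc.symm), mul_zero]
  · intro k _ hk
    unfold Mmat
    rw [if_neg (fun hc => hk (by rw [hc]; simp)), zero_mul]
  · intro hc; exact absurd (Finset.mem_univ _) hc

lemma Wmat_mul_Mmat {σ : Equiv.Perm (Fin n)} {a : Fin n → F} (ha : ∀ j, a j ≠ 0) :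
    Wmat σ a * Mmat σ a = 1 := by
  ext p q
  rw [Matrix.mul_apply, Finset.sum_eq_single (σ p)]
  · unfold Mmat Wmat
    rw [if_pos rfl]
    by_cases hpq : q = p
    · rw [hpq, if_pos rfl, Matrix.one_apply_eq, inv_mul_cancel₀ (ha _)]
    · rw [if_neg (fun hc : σ p = σ q => hpq (σ.injective hc).symm),
        Matrix.one_apply_ne (fun hc => hpq hc.symm), mul_zero]
  · intro k _ hk
    unfold Wmat
    rw [if_neg (fun hc => hk hc), zero_mul]
  · intro hc; exact absurd (Finset.mem_univ _) hc

variable [Fintype F] [DecidableEq F]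

/-- monomial matrix as an element of `GL n F` -/
def MmatGL (σ : Equiv.Perm (Fin n)) (a : Fin n → F) (ha : ∀ j, a j ≠ 0) : GL (Fin n) F :=
  ⟨Mmat σ a, Wmat σ a, Mmat_mul_Wmat ha, Wmat_mul_Mmat ha⟩

@[simp] lemma MmatGL_val {σ : Equiv.Perm (Fin n)} {a : Fin n → F} (ha : ∀ j, a j ≠ 0) :
    (↑(MmatGL σ a ha) : Matrix (Fin n) (Fin n) F) = Mmat σ a := rfl

@[simp] lemma MmatGL_inv_val {σ : Equiv.Perm (Fin n)} {a : Fin n → F} (ha : ∀ j, a j ≠ 0) :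
    (↑((MmatGL σ a ha)⁻¹) : Matrix (Fin n) (Fin n) F) = Wmat σ a := rfl

/-- elementary unipotent element of `GL n F` -/
def EuGL (i j : Fin n) (hij : i ≠ j) (t : F) : GL (Fin n) F :=
  ⟨1 + Matrix.single i j t, 1 + Matrix.single i j (-t),
   by
    have h1 : (1 + Matrix.single i j t) * (1 + Matrix.single i j (-t))
        = 1 + (Matrix.single i j t + Matrix.single i j (-t))
          + Matrix.single i j t * Matrix.single i j (-t) := by noncomm_ring
    rw [h1, Matrix.single_mul_single_of_ne (h := Ne.symm hij),
      ← Matrix.single_add, add_neg_cancel]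
    simp,
   by
    have h1 : (1 + Matrix.single i j (-t)) * (1 + Matrix.single i j t)
        = 1 + (Matrix.single i j (-t) + Matrix.single i j t)
          + Matrix.single i j (-t) * Matrix.single i j t := by noncomm_ring
    rw [h1, Matrix.single_mul_single_of_ne (h := Ne.symm hij),
      ← Matrix.single_add, neg_add_cancel]
    simp⟩

@[simp] lemma EuGL_val (i j : Fin n) (hij : i ≠ j) (t : F) :
    (↑(EuGL i j hij t) : Matrix (Fin n) (Fin n) F) = 1 + Matrix.single i j t := rfl

lemma isUU_one_add_std {i j : Fin n} (hij : i < j) (t : F) :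
    IsUU (1 + Matrix.single i j t) := by
  constructor
  · intro p q hqp
    rw [Matrix.add_apply, Matrix.one_apply_ne hqp.ne', stdB_apply,
      if_neg (fun hc => by rw [← hc.1, ← hc.2] at hqp; exact absurd hij (not_lt.mpr hqp.le)), add_zero]
  · intro p
    rw [Matrix.add_apply, Matrix.one_apply_eq, stdB_apply,
      if_neg (fun hc => hij.ne (hc.1.trans hc.2.symm)), add_zero]

lemma sd_add (A B : Matrix (Fin n) (Fin n) F) : sd (A + B) = sd A + sd B := by
  unfold sd
  rw [← Finset.sum_add_distrib]
  apply Finset.sum_congr rfl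
  intro p _
  rw [Matrix.add_apply]
  by_cases h : (p.1 : ℕ) + 1 = (p.2 : ℕ)
  · rw [if_pos h, if_pos h, if_pos h]
  · rw [if_neg h, if_neg h, if_neg h, add_zero]

lemma sd_std (i j : Fin n) (t : F) :
    sd (Matrix.single i j t) = if (i : ℕ) + 1 = (j : ℕ) then t else 0 := by
  unfold sd
  rw [Finset.sum_eq_single (i, j)]
  · simp only
    by_cases h : (i : ℕ) + 1 = (j : ℕ)
    · rw [if_pos h, if_pos h, stdB_apply, if_pos ⟨rfl, rfl⟩]
    · rw [if_neg h, if_neg h]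
  · intro p _ hp
    by_cases h : (p.1 : ℕ) + 1 = (p.2 : ℕ)
    · rw [if_pos h, stdB_apply, if_neg (fun hc => hp (Prod.ext hc.1.symm hc.2.symm))]
    · rw [if_neg h]
  · intro hc; exact absurd (Finset.mem_univ _) hc

lemma sd_one_add_std (i j : Fin n) (t : F) :
    sd (1 + Matrix.single i j t) = if (i : ℕ) + 1 = (j : ℕ) then t else 0 := by
  rw [sd_add, sd_one, zero_add, sd_std]

/-- conjugation of an elementary by a monomial matrix -/
lemma conj_eu {σ : Equiv.Perm (Fin n)} {a : Fin n → F} (ha : ∀ j, a j ≠ 0)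
    {i j : Fin n} (hij : i ≠ j) (t : F) :
    (↑(MmatGL σ a ha * EuGL i j hij t * (MmatGL σ a ha)⁻¹) : Matrix (Fin n) (Fin n) F)
      = 1 + Matrix.single (σ i) (σ j) (a i * t * (a j)⁻¹) := by
  rw [Units.val_mul, Units.val_mul, MmatGL_val, MmatGL_inv_val, EuGL_val]
  have h1 : Mmat σ a * (1 + Matrix.single i j t) * Wmat σ a
      = Mmat σ a * Wmat σ a + Mmat σ a * Matrix.single i j t * Wmat σ a := by
    noncomm_ring
  rw [h1, Mmat_mul_Wmat ha]
  congr 1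
  have h2 : Mmat σ a * Matrix.single i j t = Matrix.single (σ i) j (a i * t) := by
    ext p q
    rw [Matrix.mul_apply, Finset.sum_eq_single i]
    · show Mmat σ a p i * Matrix.single i j t i q = Matrix.single (σ i) j (a i * t) p q
      unfold Mmat
      rw [stdB_apply, stdB_apply]
      by_cases hp : p = σ i
      · by_cases hq : j = q
        · rw [if_pos hp, if_pos ⟨rfl, hq⟩, if_pos ⟨hp.symm, hq⟩]
        · rw [if_neg (fun hc : i = i ∧ j = q => hq hc.2), mul_zero,
            if_neg (fun hc : σ i = p ∧ j = q => hq hc.2)]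
      · rw [if_neg hp, zero_mul, if_neg (fun hc : σ i = p ∧ j = q => hp hc.1.symm)]
    · intro k _ hk
      rw [stdB_apply, if_neg (fun hc : i = k ∧ j = q => hk hc.1.symm), mul_zero]
    · intro hc; exact absurd (Finset.mem_univ _) hc
  rw [h2]
  ext p q
  rw [Matrix.mul_apply, Finset.sum_eq_single j]
  · show Matrix.single (σ i) j (a i * t) p j * Wmat σ a j q
      = Matrix.single (σ i) (σ j) (a i * t * (a j)⁻¹) p q
    unfold Wmat
    rw [stdB_apply, stdB_apply]
    by_cases hp : σ i = p
    · by_cases hq : q = σ j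
      · rw [if_pos ⟨hp, rfl⟩, if_pos hq, if_pos ⟨hp, hq.symm⟩]
      · rw [if_neg hq, mul_zero, if_neg (fun hc : σ i = p ∧ σ j = q => hq hc.2.symm)]
    · rw [if_neg (fun hc : σ i = p ∧ j = j => hp hc.1), zero_mul,
        if_neg (fun hc : σ i = p ∧ σ j = q => hp hc.1)]
  · intro k _ hk
    rw [stdB_apply, if_neg (fun hc : σ i = p ∧ j = k => hk hc.2.symm), zero_mul]
  · intro hc; exact absurd (Finset.mem_univ _) hc

end Part5
section Part6
variable {F : Type} [Field F] [Fintype F] [DecidableEq F] {n : ℕ}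

lemma e_single_e_zero (ψ : AddChar F ℂ) {m u w : GL (Fin n) F}
    (hu : IsUU (↑u : Matrix (Fin n) (Fin n) F)) (hw : IsUU (↑w : Matrix (Fin n) (Fin n) F))
    (hmu : m * u = w * m) (hne : psiMu ψ n [n] w ≠ psiMu ψ n [n] u) :
    eMu ψ n [n] * MonoidAlgebra.single m 1 * eMu ψ n [n] = 0 := by
  set e := eMu ψ n [n] with hE
  set X := e * MonoidAlgebra.single m 1 * e with hX
  have h0 : e = (psiMu ψ n [n] u)⁻¹ • (MonoidAlgebra.single u 1 * e) := by
    rw [single_mul_e ψ hu, smul_smul, inv_mul_cancel₀ (psiMu_ne_zero ψ u), one_smul]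
  have hsplit : MonoidAlgebra.single (w * m) (1 : ℂ)
      = MonoidAlgebra.single w 1 * MonoidAlgebra.single m 1 := by
    rw [MonoidAlgebra.single_mul_single, one_mul]
  have h1 : MonoidAlgebra.single m (1 : ℂ) * e
      = (psiMu ψ n [n] u)⁻¹ • (MonoidAlgebra.single w 1 * (MonoidAlgebra.single m 1 * e)) := by
    conv_lhs => rw [h0]
    rw [mul_smul_comm, ← mul_assoc, MonoidAlgebra.single_mul_single, one_mul, hmu, hsplit,
      mul_assoc]
  have key : X = ((psiMu ψ n [n] u)⁻¹ * psiMu ψ n [n] w) • X := by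
    conv_lhs => rw [hX, mul_assoc, h1]
    rw [mul_smul_comm, ← mul_assoc, e_mul_single ψ hw, smul_mul_assoc, smul_smul, ← mul_assoc]
  have h2 : ((1 : ℂ) - (psiMu ψ n [n] u)⁻¹ * psiMu ψ n [n] w) • X = 0 := by
    rw [sub_smul, one_smul, ← key, sub_self]
  rcases smul_eq_zero.mp h2 with h3 | h3
  · exfalso
    apply hne
    have h4 : (psiMu ψ n [n] u)⁻¹ * psiMu ψ n [n] w = 1 := (sub_eq_zero.mp h3).symm
    rwa [inv_mul_eq_one₀ (psiMu_ne_zero ψ u), eq_comm] at h4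
  · exact h3

lemma e_Mmat_e_zero (ψ : AddChar F ℂ) (hψ : ψ ≠ 1) {σ : Equiv.Perm (Fin n)} {a : Fin n → F}
    (ha : ∀ j, a j ≠ 0) (hnr : ¬ RelMono σ a) :
    eMu ψ n [n] * MonoidAlgebra.single (MmatGL σ a ha) 1 * eMu ψ n [n] = 0 := by
  unfold RelMono at hnr
  push_neg at hnr
  obtain ⟨i, i', hii', hge, himp⟩ := hnr
  have hne_ii' : i ≠ i' := fun hc => by rw [hc] at hii'; omega
  have hσne : (σ i : ℕ) ≠ (σ i' : ℕ) := fun hc => by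
    have h := perm_inj_nat σ hc; omega
  have hlt : (σ i : ℕ) < (σ i' : ℕ) := by omega
  have hlti : i < i' := Fin.lt_def.mpr (by omega)
  have hltσ : σ i < σ i' := Fin.lt_def.mpr hlt
  obtain ⟨x, hx⟩ : ∃ x : F, ψ x ≠ 1 := by
    by_contra hc; push_neg at hc
    exact hψ (DFunLike.ext ψ 1 fun y => by simpa using hc y)
  have main : ∀ t : F, ψ (a i * t * (a i')⁻¹ * (if (σ i : ℕ) + 1 = (σ i' : ℕ) then 1 else 0))
        ≠ ψ t →
      eMu ψ n [n] * MonoidAlgebra.single (MmatGL σ a ha) 1 * eMu ψ n [n] = 0 := by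
    intro t hta
    set m := MmatGL σ a ha with hm
    set u := EuGL i i' hne_ii' t with hudef
    set w := m * u * m⁻¹ with hwdef
    have hu : IsUU (↑u : Matrix (Fin n) (Fin n) F) := by
      rw [hudef, EuGL_val]; exact isUU_one_add_std hlti t
    have hwval : (↑w : Matrix (Fin n) (Fin n) F)
        = 1 + Matrix.single (σ i) (σ i') (a i * t * (a i')⁻¹) := conj_eu ha hne_ii' t
    have hw : IsUU (↑w : Matrix (Fin n) (Fin n) F) := by
      rw [hwval]; exact isUU_one_add_std hltσ _
    apply e_single_e_zero ψ hu hw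
    · rw [hwdef, inv_mul_cancel_right]
    · rw [psiMu_n, psiMu_n, hwval, hudef, EuGL_val, sd_one_add_std, sd_one_add_std,
        if_pos hii'.symm]
      intro hc
      apply hta
      rw [← hc]
      congr 1
      by_cases hcc : (σ i : ℕ) + 1 = (σ i' : ℕ)
      · rw [if_pos hcc, if_pos hcc, mul_one]
      · rw [if_neg hcc, if_neg hcc, mul_zero]
  by_cases hcase : (σ i' : ℕ) = (σ i : ℕ) + 1
  · have haa : a i' ≠ a i := himp hcase
    set c : F := a i * (a i')⁻¹ with hc
    have hc1 : c ≠ 1 := fun h1 => haa ((mul_inv_eq_one₀ (ha i')).mp h1).symm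
    apply main ((c - 1)⁻¹ * x)
    rw [if_pos hcase.symm, mul_one]
    have hcm1 : c - 1 ≠ 0 := sub_ne_zero.mpr hc1
    have harr : a i * ((c - 1)⁻¹ * x) * (a i')⁻¹ = (c - 1)⁻¹ * x + x := by
      have h5 : a i * ((c - 1)⁻¹ * x) * (a i')⁻¹ = c * ((c - 1)⁻¹ * x) := by rw [hc]; ring
      rw [h5]
      field_simp
      ring
    rw [harr, ψ.map_add_eq_mul]
    exact fun hcontra => hx (mul_left_cancel₀ (addChar_ne_zero ψ _) (hcontra.trans (mul_one _).symm))
  · apply main x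
    rw [if_neg (fun hcc => hcase hcc.symm), mul_zero, ψ.map_zero_eq_one]
    exact fun hcontra => hx hcontra.symm
end Part6
section Part7
variable {F : Type} [Field F] [Fintype F] [DecidableEq F] {n : ℕ}

/-- matrix supported on column `i0` -/
def colMat (i0 : Fin n) (c : Fin n → F) : Matrix (Fin n) (Fin n) F :=
  fun p q => if q = i0 then c p else 0

/-- matrix supported on row `k0` -/
def rowMat (k0 : Fin n) (d : Fin n → F) : Matrix (Fin n) (Fin n) F :=
  fun p q => if p = k0 then d q else 0

lemma colMat_mul_apply (i0 : Fin n) (c : Fin n → F) (A : Matrix (Fin n) (Fin n) F) (p q : Fin n) :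
    (colMat i0 c * A) p q = c p * A i0 q := by
  rw [Matrix.mul_apply, Finset.sum_eq_single i0]
  · show (if i0 = i0 then c p else 0) * A i0 q = _
    rw [if_pos rfl]
  · intro k _ hk
    show (if k = i0 then c p else 0) * A k q = 0
    rw [if_neg hk, zero_mul]
  · intro hc; exact absurd (Finset.mem_univ _) hc

lemma mul_rowMat_apply (k0 : Fin n) (d : Fin n → F) (A : Matrix (Fin n) (Fin n) F) (p q : Fin n) :
    (A * rowMat k0 d) p q = A p k0 * d q := by
  rw [Matrix.mul_apply, Finset.sum_eq_single k0]
  · show A p k0 * (if k0 = k0 then d q else 0) = _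
    rw [if_pos rfl]
  · intro k _ hk
    show A p k * (if k = k0 then d q else 0) = 0
    rw [if_neg hk, mul_zero]
  · intro hc; exact absurd (Finset.mem_univ _) hc

lemma colMat_mul_colMat (i0 : Fin n) (c c' : Fin n → F) (h : c' i0 = 0) :
    colMat i0 c * colMat i0 c' = 0 := by
  ext p q
  rw [colMat_mul_apply]
  show c p * (if q = i0 then c' i0 else 0) = 0
  by_cases hq : q = i0
  · rw [if_pos hq, h, mul_zero]
  · rw [if_neg hq, mul_zero]

lemma rowMat_mul_rowMat (k0 : Fin n) (d d' : Fin n → F) (h : d k0 = 0) :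
    rowMat k0 d * rowMat k0 d' = 0 := by
  ext p q
  rw [mul_rowMat_apply]
  show (if p = k0 then d k0 else 0) * d' q = 0
  by_cases hp : p = k0
  · rw [if_pos hp, h, zero_mul]
  · rw [if_neg hp, zero_mul]

lemma colMat_add_neg (i0 : Fin n) (c : Fin n → F) :
    colMat i0 c + colMat i0 (fun p => -(c p)) = 0 := by
  ext p q
  show (if q = i0 then c p else 0) + (if q = i0 then -(c p) else 0) = 0
  by_cases hq : q = i0
  · rw [if_pos hq, if_pos hq, add_neg_cancel]
  · rw [if_neg hq, if_neg hq, add_zero]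

lemma rowMat_add_neg (k0 : Fin n) (d : Fin n → F) :
    rowMat k0 d + rowMat k0 (fun q => -(d q)) = 0 := by
  ext p q
  show (if p = k0 then d q else 0) + (if p = k0 then -(d q) else 0) = 0
  by_cases hp : p = k0
  · rw [if_pos hp, if_pos hp, add_neg_cancel]
  · rw [if_neg hp, if_neg hp, add_zero]

/-- unipotent column-clearing element of `GL n F` -/
def colGL (i0 : Fin n) (c : Fin n → F) (h : c i0 = 0) : GL (Fin n) F :=
  ⟨1 + colMat i0 c, 1 + colMat i0 (fun p => -(c p)),
   by
    have h1 : (1 + colMat i0 c) * (1 + colMat i0 (fun p => -(c p)))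
        = 1 + (colMat i0 c + colMat i0 (fun p => -(c p)))
          + colMat i0 c * colMat i0 (fun p => -(c p)) := by noncomm_ring
    rw [h1, colMat_add_neg, colMat_mul_colMat i0 c _ (by rw [h, neg_zero])]
    simp,
   by
    have h1 : (1 + colMat i0 (fun p => -(c p))) * (1 + colMat i0 c)
        = 1 + (colMat i0 c + colMat i0 (fun p => -(c p)))
          + colMat i0 (fun p => -(c p)) * colMat i0 c := by noncomm_ring
    rw [h1, colMat_add_neg, colMat_mul_colMat i0 _ c h]
    simp⟩

/-- unipotent row-clearing element of `GL n F` -/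
def rowGL (k0 : Fin n) (d : Fin n → F) (h : d k0 = 0) : GL (Fin n) F :=
  ⟨1 + rowMat k0 d, 1 + rowMat k0 (fun q => -(d q)),
   by
    have h1 : (1 + rowMat k0 d) * (1 + rowMat k0 (fun q => -(d q)))
        = 1 + (rowMat k0 d + rowMat k0 (fun q => -(d q)))
          + rowMat k0 d * rowMat k0 (fun q => -(d q)) := by noncomm_ring
    rw [h1, rowMat_add_neg, rowMat_mul_rowMat k0 d _ h]
    simp,
   by
    have h1 : (1 + rowMat k0 (fun q => -(d q))) * (1 + rowMat k0 d)
        = 1 + (rowMat k0 d + rowMat k0 (fun q => -(d q)))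
          + rowMat k0 (fun q => -(d q)) * rowMat k0 d := by noncomm_ring
    rw [h1, rowMat_add_neg, rowMat_mul_rowMat k0 _ d (by rw [h, neg_zero])]
    simp⟩

@[simp] lemma colGL_val (i0 : Fin n) (c : Fin n → F) (h : c i0 = 0) :
    (↑(colGL i0 c h) : Matrix (Fin n) (Fin n) F) = 1 + colMat i0 c := rfl

@[simp] lemma rowGL_val (k0 : Fin n) (d : Fin n → F) (h : d k0 = 0) :
    (↑(rowGL k0 d h) : Matrix (Fin n) (Fin n) F) = 1 + rowMat k0 d := rfl

lemma colGL_isUU (i0 : Fin n) (c : Fin n → F) (h : c i0 = 0)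
    (hsupp : ∀ p : Fin n, ¬ p < i0 → c p = 0) :
    IsUU (↑(colGL i0 c h) : Matrix (Fin n) (Fin n) F) := by
  rw [colGL_val]
  constructor
  · intro p q hqp
    show (1 : Matrix (Fin n) (Fin n) F) p q + (if q = i0 then c p else 0) = 0
    rw [Matrix.one_apply_ne hqp.ne']
    by_cases hq : q = i0
    · rw [if_pos hq, hsupp p (fun hc => absurd (hq ▸ hqp) (not_lt.mpr hc.le)), zero_add]
    · rw [if_neg hq, add_zero]
  · intro p
    show (1 : Matrix (Fin n) (Fin n) F) p p + (if p = i0 then c p else 0) = 1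
    rw [Matrix.one_apply_eq]
    by_cases hp : p = i0
    · rw [if_pos hp, hp, h, add_zero]
    · rw [if_neg hp, add_zero]

lemma rowGL_isUU (k0 : Fin n) (d : Fin n → F) (h : d k0 = 0)
    (hsupp : ∀ q : Fin n, ¬ k0 < q → d q = 0) :
    IsUU (↑(rowGL k0 d h) : Matrix (Fin n) (Fin n) F) := by
  rw [rowGL_val]
  constructor
  · intro p q hqp
    show (1 : Matrix (Fin n) (Fin n) F) p q + (if p = k0 then d q else 0) = 0
    rw [Matrix.one_apply_ne hqp.ne']
    by_cases hp : p = k0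
    · rw [if_pos hp, hsupp q (fun hc => absurd (hp ▸ hqp) (not_lt.mpr hc.le)), zero_add]
    · rw [if_neg hp, add_zero]
  · intro p
    show (1 : Matrix (Fin n) (Fin n) F) p p + (if p = k0 then d p else 0) = 1
    rw [Matrix.one_apply_eq]
    by_cases hp : p = k0
    · rw [if_pos hp, hp, h, add_zero]
    · rw [if_neg hp, add_zero]

/-- "processed" invariant for Gaussian elimination -/
def Proc (A : Matrix (Fin n) (Fin n) F) (r : Fin n → Fin n) (k : ℕ) : Prop :=
  (∀ j j' : Fin n, (j : ℕ) < k → (j' : ℕ) < k → r j = r j' → j = j') ∧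
  (∀ j : Fin n, (j : ℕ) < k →
    A (r j) j ≠ 0 ∧ (∀ i, i ≠ r j → A i j = 0) ∧ (∀ q, q ≠ j → A (r j) q = 0))

lemma proc_final {g : GL (Fin n) F} {r : Fin n → Fin n}
    (hp : Proc (↑g : Matrix (Fin n) (Fin n) F) r n) :
    ∃ (σ : Equiv.Perm (Fin n)) (a : Fin n → F) (ha : ∀ j, a j ≠ 0),
      (↑g : Matrix (Fin n) (Fin n) F) = Mmat σ a := by
  have hinjr : Function.Injective r := fun j j' h => hp.1 j j' j.isLt j'.isLt h
  set σ := Equiv.ofBijective r (Finite.injective_iff_bijective.mp hinjr) with hσ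
  have hσr : ∀ j, σ j = r j := fun j => rfl
  refine ⟨σ, fun j => (↑g : Matrix (Fin n) (Fin n) F) (r j) j,
    fun j => (hp.2 j j.isLt).1, ?_⟩
  ext p q
  unfold Mmat
  by_cases h : p = σ q
  · rw [if_pos h, h, hσr]
  · rw [if_neg h]
    exact (hp.2 q q.isLt).2.1 p (fun hc => h (by rw [hσr, ← hc]))

lemma proc_step {g : GL (Fin n) F} {r : Fin n → Fin n} {k : ℕ} (hk : k < n)
    (hp : Proc (↑g : Matrix (Fin n) (Fin n) F) r k) :
    ∃ (u v : GL (Fin n) F) (r' : Fin n → Fin n),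
      IsUU (↑u : Matrix (Fin n) (Fin n) F) ∧ IsUU (↑v : Matrix (Fin n) (Fin n) F) ∧
      Proc (↑(u * g * v) : Matrix (Fin n) (Fin n) F) r' (k + 1) := by
  set A := (↑g : Matrix (Fin n) (Fin n) F) with hA
  set col : Fin n := ⟨k, hk⟩ with hcol
  have hcolv : (col : ℕ) = k := rfl
  -- pivot rows are zero at column col
  have hpivotcol : ∀ j : Fin n, (j : ℕ) < k → A (r j) col = 0 := by
    intro j hj
    exact (hp.2 j hj).2.2 col (fun hc => by rw [hc] at hcolv; omega)
  -- find the pivot row istar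
  set T := Finset.univ.filter
    (fun i : Fin n => A i col ≠ 0 ∧ ∀ j : Fin n, (j : ℕ) < k → i ≠ r j) with hT
  have hTne : T.Nonempty := by
    by_contra hTe
    rw [Finset.not_nonempty_iff_eq_empty] at hTe
    have hTmem : ∀ i : Fin n, A i col ≠ 0 → ∃ j : Fin n, (j : ℕ) < k ∧ i = r j := by
      intro i hi
      by_contra hno
      push_neg at hno
      have : i ∈ T := by
        rw [hT, Finset.mem_filter]
        exact ⟨Finset.mem_univ _, hi, fun j hj => hno j hj⟩
      rw [hTe] at this
      exact absurd this (Finset.notMem_empty i)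
    -- construct a kernel vector
    set x : Fin n → F := fun j =>
      if j = col then 1 else if (j : ℕ) < k then -(A (r j) col) * (A (r j) j)⁻¹ else 0 with hx
    have hxcol : x col = 1 := by rw [hx]; simp
    have hmv : A.mulVec x = 0 := by
      funext i
      show ∑ j, A i j * x j = 0
      by_cases hi : ∃ j0 : Fin n, (j0 : ℕ) < k ∧ i = r j0
      · obtain ⟨j0, hj0, hij0⟩ := hi
        apply Finset.sum_eq_zero
        intro q _
        by_cases hq : q = j0
        · subst hq
          have hxq : x q = 0 := by
            simp only [hx]
            rw [if_neg (fun hc : q = col => by rw [hc, hcolv] at hj0; omega),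
              if_pos hj0, hpivotcol q hj0, neg_zero, zero_mul]
          rw [hxq, mul_zero]
        · rw [hij0, (hp.2 j0 hj0).2.2 q hq, zero_mul]
      · push_neg at hi
        apply Finset.sum_eq_zero
        intro q _
        by_cases hqc : q = col
        · have hAq : A i q = 0 := by
            rw [hqc]
            by_contra hAi
            obtain ⟨j, hj, hij⟩ := hTmem i hAi
            exact (hi j hj) hij
          rw [hAq, zero_mul]
        · by_cases hqk : (q : ℕ) < k
          · rw [(hp.2 q hqk).2.1 i (hi q hqk), zero_mul]
          · have hxq : x q = 0 := by
              simp only [hx]; rw [if_neg hqc, if_neg hqk]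
            rw [hxq, mul_zero]
    have hginv : (↑(g⁻¹) : Matrix (Fin n) (Fin n) F) * A = 1 := g.inv_mul
    have hx0 : x = 0 := by
      have h1 : x = (1 : Matrix (Fin n) (Fin n) F).mulVec x := (Matrix.one_mulVec x).symm
      rw [← hginv, ← Matrix.mulVec_mulVec, hmv, Matrix.mulVec_zero] at h1
      exact h1
    rw [hx0] at hxcol
    exact one_ne_zero ((show (0 : Fin n → F) col = (0:F) from rfl) ▸ hxcol).symm
  -- choose the pivot row
  set istar := T.max' hTne with histar
  have histmem := T.max'_mem hTne
  rw [← histar, hT, Finset.mem_filter] at histmem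
  have hAstar : A istar col ≠ 0 := histmem.2.1
  have hnp : ∀ j : Fin n, (j : ℕ) < k → istar ≠ r j := histmem.2.2
  have hbelow : ∀ i : Fin n, istar < i → A i col = 0 := by
    intro i hi
    by_cases hip : ∃ j : Fin n, (j : ℕ) < k ∧ i = r j
    · obtain ⟨j, hj, hij⟩ := hip
      rw [hij]; exact hpivotcol j hj
    · push_neg at hip
      by_contra hAi
      have : i ∈ T := by
        rw [hT, Finset.mem_filter]
        exact ⟨Finset.mem_univ _, hAi, fun j hj => hip j hj⟩
      have := Finset.le_max' T i this
      rw [← histar] at this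
      exact absurd hi (not_lt.mpr this)
  -- the clearing data
  set c : Fin n → F := fun p => if p < istar then -(A p col) * (A istar col)⁻¹ else 0 with hcdef
  have hc0 : c istar = 0 := by simp only [hcdef]; rw [if_neg (lt_irrefl istar)]
  set d : Fin n → F := fun q => if col < q then -(A istar q) * (A istar col)⁻¹ else 0 with hddef
  have hd0 : d col = 0 := by simp only [hddef]; rw [if_neg (lt_irrefl col)]
  refine ⟨colGL istar c hc0, rowGL col d hd0, fun j => if (j : ℕ) = k then istar else r j,
    colGL_isUU istar c hc0 (fun p hpn => by simp only [hcdef]; rw [if_neg hpn]),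
    rowGL_isUU col d hd0 (fun q hqn => by simp only [hddef]; rw [if_neg hqn]), ?_⟩
  set r' : Fin n → Fin n := fun j => if (j : ℕ) = k then istar else r j with hr'
  -- entries of the new matrix
  set B := (↑(colGL istar c hc0 * g * rowGL col d hd0) : Matrix (Fin n) (Fin n) F) with hBdef
  set A' := (1 + colMat istar c) * A with hA'def
  have hA' : ∀ p q, A' p q = A p q + c p * A istar q := by
    intro p q
    rw [hA'def, add_mul, one_mul, Matrix.add_apply, colMat_mul_apply]
  have hB : ∀ p q, B p q = A' p q + A' p col * d q := by
    intro p q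
    have : B = A' * (1 + rowMat col d) := by
      rw [hBdef, Units.val_mul, Units.val_mul, colGL_val, rowGL_val, hA'def, hA]
    rw [this, mul_add, mul_one, Matrix.add_apply, mul_rowMat_apply]
  have hA'istar : ∀ q, A' istar q = A istar q := by
    intro q; rw [hA' istar q, hc0, zero_mul, add_zero]
  have hA'col : ∀ p, p ≠ istar → A' p col = 0 := by
    intro p hpne
    rw [hA' p col]
    rcases lt_or_gt_of_ne hpne with hlt | hgt
    · simp only [hcdef]
      rw [if_pos hlt, mul_assoc, inv_mul_cancel₀ hAstar, mul_one, add_neg_cancel]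
    · rw [hbelow p hgt, show c p = 0 from by simp only [hcdef]; rw [if_neg (not_lt.mpr hgt.le)],
        zero_mul, add_zero]
  have hcpivot : ∀ j : Fin n, (j : ℕ) < k → c (r j) = 0 := by
    intro j hj
    simp only [hcdef]
    by_cases hlt : r j < istar
    · rw [if_pos hlt, hpivotcol j hj, neg_zero, zero_mul]
    · rw [if_neg hlt]
  have hBpivotrow : ∀ j : Fin n, (j : ℕ) < k → ∀ q, B (r j) q = A (r j) q := by
    intro j hj q
    have hne : r j ≠ istar := fun hc => hnp j hj hc.symm
    rw [hB, hA'col (r j) hne, zero_mul, add_zero, hA', hcpivot j hj, zero_mul, add_zero]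
  have hBcolj : ∀ j : Fin n, (j : ℕ) < k → ∀ i, B i j = A i j := by
    intro j hj i
    have hdj : d j = 0 := by
      simp only [hddef]
      rw [if_neg (fun hc : col < j => by rw [Fin.lt_def, hcolv] at hc; omega)]
    have hAistarj : A istar j = 0 := (hp.2 j hj).2.1 istar (hnp j hj)
    rw [hB, hdj, mul_zero, add_zero, hA', hAistarj, mul_zero, add_zero]
  have hBcolcol : ∀ i, i ≠ istar → B i col = 0 := by
    intro i hi
    rw [hB, hd0, mul_zero, add_zero, hA'col i hi]
  have hBstarcol : B istar col = A istar col := by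
    rw [hB, hd0, mul_zero, add_zero, hA'istar]
  have hBstarrow : ∀ q, q ≠ col → B istar q = 0 := by
    intro q hq
    rw [hB, hA'istar, hA'istar]
    rcases lt_or_gt_of_ne hq with hlt | hgt
    · -- q < col, so q is a processed column and A istar q = 0 ; also d q = 0
      have hqk : (q : ℕ) < k := by have := Fin.lt_def.mp hlt; rw [hcolv] at this; exact this
      have h1 : A istar q = 0 := (hp.2 q hqk).2.1 istar (hnp q hqk)
      have h2 : d q = 0 := by simp only [hddef]; rw [if_neg (not_lt.mpr hlt.le)]
      rw [h1, h2, mul_zero, add_zero]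
    · have h2 : d q = -(A istar q) * (A istar col)⁻¹ := by simp only [hddef]; rw [if_pos hgt]
      rw [h2]
      field_simp
      ring
  -- assemble Proc B r' (k+1)
  constructor
  · intro j j' hj hj' hrr
    simp only [hr'] at hrr
    by_cases h1 : (j : ℕ) = k <;> by_cases h2 : (j' : ℕ) = k
    · exact Fin.ext (h1.trans h2.symm)
    · rw [if_pos h1, if_neg h2] at hrr
      exact absurd hrr.symm (hnp j' (by omega)).symm
    · rw [if_neg h1, if_pos h2] at hrr
      exact absurd hrr (hnp j (by omega)).symm
    · rw [if_neg h1, if_neg h2] at hrr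
      exact hp.1 j j' (by omega) (by omega) hrr
  · intro j hj
    by_cases h1 : (j : ℕ) = k
    · have hjcol : j = col := Fin.ext (by rw [h1, hcolv])
      have hrj : r' j = istar := by simp only [hr']; rw [if_pos h1]
      rw [hrj, hjcol]
      exact ⟨by rw [hBstarcol]; exact hAstar,
        fun i hi => hBcolcol i hi,
        fun q hq => hBstarrow q hq⟩
    · have hjk : (j : ℕ) < k := by omega
      have hrj : r' j = r j := by simp only [hr']; rw [if_neg h1]
      rw [hrj]
      refine ⟨by rw [hBpivotrow j hjk]; exact (hp.2 j hjk).1,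
        fun i hi => by rw [hBcolj j hjk]; exact (hp.2 j hjk).2.1 i hi, fun q hq => ?_⟩
      rw [hBpivotrow j hjk]
      exact (hp.2 j hjk).2.2 q hq

/-- every invertible matrix factors as (unipotent upper) * monomial * (unipotent upper) -/
lemma bruhat_decomp (g : GL (Fin n) F) :
    ∃ (u₁ u₂ : GL (Fin n) F) (σ : Equiv.Perm (Fin n)) (a : Fin n → F) (ha : ∀ j, a j ≠ 0),
      IsUU (↑u₁ : Matrix (Fin n) (Fin n) F) ∧ IsUU (↑u₂ : Matrix (Fin n) (Fin n) F) ∧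
      g = u₁ * MmatGL σ a ha * u₂ := by
  have main : ∀ (d k : ℕ), n ≤ k + d → ∀ (g : GL (Fin n) F) (r : Fin n → Fin n),
      Proc (↑g : Matrix (Fin n) (Fin n) F) r k →
      ∃ (u₁ u₂ : GL (Fin n) F) (σ : Equiv.Perm (Fin n)) (a : Fin n → F) (ha : ∀ j, a j ≠ 0),
        IsUU (↑u₁ : Matrix (Fin n) (Fin n) F) ∧ IsUU (↑u₂ : Matrix (Fin n) (Fin n) F) ∧
        g = u₁ * MmatGL σ a ha * u₂ := by
    intro d
    induction d with
    | zero =>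
      intro k hkn g r hpr
      have hpn : Proc (↑g : Matrix (Fin n) (Fin n) F) r n := by
        refine ⟨fun j j' hj hj' => hpr.1 j j' (by omega) (by omega),
          fun j hj => hpr.2 j (by omega)⟩
      obtain ⟨σ, a, ha, hval⟩ := proc_final hpn
      refine ⟨1, 1, σ, a, ha, IsUU.one, IsUU.one, ?_⟩
      apply Units.ext
      rw [one_mul, mul_one, MmatGL_val, hval]
    | succ d ih =>
      intro k hkn g r hpr
      rcases Nat.lt_or_ge k n with hk | hk
      · obtain ⟨u, v, r', hu, hv, hp'⟩ := proc_step hk hpr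
        obtain ⟨u₁, u₂, σ, a, ha, h1, h2, h3⟩ := ih (k + 1) (by omega) (u * g * v) r' hp'
        refine ⟨u⁻¹ * u₁, u₂ * v⁻¹, σ, a, ha, IsUU.glMul hu.glInv h1,
          IsUU.glMul h2 hv.glInv, ?_⟩
        have h4 : u⁻¹ * u₁ * MmatGL σ a ha * (u₂ * v⁻¹)
            = u⁻¹ * (u₁ * MmatGL σ a ha * u₂) * v⁻¹ := by group
        rw [h4, ← h3]
        group
      · have hpn : Proc (↑g : Matrix (Fin n) (Fin n) F) r n := by
          refine ⟨fun j j' hj hj' => hpr.1 j j' (by omega) (by omega),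
            fun j hj => hpr.2 j (by omega)⟩
        obtain ⟨σ, a, ha, hval⟩ := proc_final hpn
        refine ⟨1, 1, σ, a, ha, IsUU.one, IsUU.one, ?_⟩
        apply Units.ext
        rw [one_mul, mul_one, MmatGL_val, hval]
  have h0 : Proc (↑g : Matrix (Fin n) (Fin n) F) id 0 :=
    ⟨fun j j' hj => by omega, fun j hj => by omega⟩
  exact main n 0 (by omega) g id h0

end Part7
section Part8
variable {F : Type} [Field F] [Fintype F] [DecidableEq F] {n : ℕ}

lemma sandwich (e x y z : MonoidAlgebra ℂ (GL (Fin n) F)) :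
    e * (x * y * z) * e = (e * x) * y * (z * e) := by noncomm_ring

lemma sigma_fix_single (ψ : AddChar F ℂ) (hψ : ψ ≠ 1) (g : GL (Fin n) F) :
    sigmaMA (eMu ψ n [n] * MonoidAlgebra.single g 1 * eMu ψ n [n])
      = eMu ψ n [n] * MonoidAlgebra.single g 1 * eMu ψ n [n] := by
  obtain ⟨u₁, u₂, σ, a, ha, h1, h2, h3⟩ := bruhat_decomp g
  set m := MmatGL σ a ha with hm
  have hsplitg : MonoidAlgebra.single g (1 : ℂ)
      = MonoidAlgebra.single u₁ 1 * MonoidAlgebra.single m 1 * MonoidAlgebra.single u₂ 1 := by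
    rw [MonoidAlgebra.single_mul_single, MonoidAlgebra.single_mul_single, one_mul, one_mul, ← h3]
  have hEg : eMu ψ n [n] * MonoidAlgebra.single g 1 * eMu ψ n [n]
      = (psiMu ψ n [n] u₁ * psiMu ψ n [n] u₂)
        • (eMu ψ n [n] * MonoidAlgebra.single m 1 * eMu ψ n [n]) := by
    rw [hsplitg, sandwich, e_mul_single ψ h1, single_mul_e ψ h2,
      smul_mul_assoc, smul_mul_assoc, mul_smul_comm, smul_smul]
  have hτg : tauGL g = tauGL u₂ * tauGL m * tauGL u₁ := by
    rw [h3, tauGL_mul, tauGL_mul, mul_assoc]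
  have hsplitτ : MonoidAlgebra.single (tauGL g) (1 : ℂ)
      = MonoidAlgebra.single (tauGL u₂) 1 * MonoidAlgebra.single (tauGL m) 1
        * MonoidAlgebra.single (tauGL u₁) 1 := by
    rw [MonoidAlgebra.single_mul_single, MonoidAlgebra.single_mul_single, one_mul, one_mul, ← hτg]
  have hEτg : eMu ψ n [n] * MonoidAlgebra.single (tauGL g) 1 * eMu ψ n [n]
      = (psiMu ψ n [n] u₁ * psiMu ψ n [n] u₂)
        • (eMu ψ n [n] * MonoidAlgebra.single (tauGL m) 1 * eMu ψ n [n]) := by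
    rw [hsplitτ, sandwich, e_mul_single ψ h2.glTau, single_mul_e ψ h1.glTau,
      smul_mul_assoc, smul_mul_assoc, mul_smul_comm, smul_smul, psiMu_tau, psiMu_tau,
      mul_comm (psiMu ψ n [n] u₂) (psiMu ψ n [n] u₁)]
  have hLHS : sigmaMA (eMu ψ n [n] * MonoidAlgebra.single g 1 * eMu ψ n [n])
      = eMu ψ n [n] * MonoidAlgebra.single (tauGL g) 1 * eMu ψ n [n] := by
    rw [sigmaMA_exe, sigmaMA_single]
  by_cases hrel : RelMono σ a
  · have hfix : tauGL m = m := by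
      apply Units.ext
      rw [tauGL_val, hm, MmatGL_val, hrel.atr_fixed]
    rw [hLHS, hEτg, hfix, ← hEg]
  · have hzero : eMu ψ n [n] * MonoidAlgebra.single m 1 * eMu ψ n [n] = 0 :=
      e_Mmat_e_zero ψ hψ ha hrel
    have hτzero : eMu ψ n [n] * MonoidAlgebra.single (tauGL m) 1 * eMu ψ n [n] = 0 := by
      have hσ := congrArg sigmaMA hzero
      rw [sigmaMA_exe, sigmaMA_single, sigmaMA_zero] at hσ
      exact hσ
    rw [hLHS, hEτg, hτzero, smul_zero, hEg, hzero, smul_zero]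

end Part8

/-- The Gelfand–Graev Hecke algebra `H_{(n)} = e_{(n)} ℂ[G] e_{(n)}`
is commutative. -/
theorem GelfandGraev_Hecke_commutative {F : Type} [Field F] [Fintype F] [DecidableEq F]
    (n : ℕ) (hn : 1 ≤ n) (ψ : AddChar F ℂ) (hψ : ψ ≠ 1)
    (a b : MonoidAlgebra ℂ (GL (Fin n) F)) :
    (eMu ψ n [n] * a * eMu ψ n [n]) * (eMu ψ n [n] * b * eMu ψ n [n]) =
      (eMu ψ n [n] * b * eMu ψ n [n]) * (eMu ψ n [n] * a * eMu ψ n [n]) := by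
  set e := eMu ψ n [n] with he
  have hfix : ∀ x : MonoidAlgebra ℂ (GL (Fin n) F), sigmaMA (e * x * e) = e * x * e := by
    intro x
    induction x using MonoidAlgebra.induction_linear with
    | zero => rw [mul_zero, zero_mul, sigmaMA_zero]
    | add f g hf hg => rw [mul_add, add_mul, sigmaMA_add, hf, hg]
    | single g c =>
      have hc : MonoidAlgebra.single g c = c • MonoidAlgebra.single g (1 : ℂ) := by
        rw [MonoidAlgebra.smul_single', mul_one]
      show sigmaMA (e * MonoidAlgebra.single g c * e) = e * MonoidAlgebra.single g c * e
      rw [hc, mul_smul_comm, smul_mul_assoc, sigmaMA_smul, he, sigma_fix_single ψ hψ g]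
  have h1 : (e * a * e) * (e * b * e) = e * (a * e * e * b) * e := by noncomm_ring
  calc (e * a * e) * (e * b * e)
      = e * (a * e * e * b) * e := h1
    _ = sigmaMA (e * (a * e * e * b) * e) := (hfix _).symm
    _ = sigmaMA ((e * a * e) * (e * b * e)) := by rw [h1]
    _ = sigmaMA (e * b * e) * sigmaMA (e * a * e) := sigmaMA_mul _ _
    _ = (e * b * e) * (e * a * e) := by rw [hfix a, hfix b]
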